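/- Let l ≥ 3 with l ≡ 0 (mod 3), let P = v_1 v_2 v_3 be a path, let C = u_1 u_2 ... u_l u_1 be a cycle vertex-disjoint from P with starting vertex u_1, and let K be the graph obtained from the disjoint union of P and C by adding the edge u_2 v_2. Then every 6-L(2,1)-labeling f of P can be extended to a 6-L(2,1)-labeling f_1 of K such that the restriction of f_1 to C is a cycle-extendable 6-L(2,1)-labeling of C of type 2. -/
import Mathlib


/-- An L(2,1)-labeling of a simple graph: adjacent vertices get labels differing by
at least 2, and vertices at distance exactly 2 get distinct labels. -/
def IsL21Labeling {V : Type*} (G : SimpleGraph V) (f : V → ℕ) : Prop :=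
  (∀ a b : V, G.Adj a b → 2 ≤ ((f a : ℤ) - (f b : ℤ)).natAbs) ∧
  (∀ a b : V, G.dist a b = 2 → f a ≠ f b)

/-- A k-L(2,1)-labeling: an L(2,1)-labeling with all labels in {0, 1, ..., k}. -/
def IsKL21Labeling {V : Type*} (G : SimpleGraph V) (k : ℕ) (f : V → ℕ) : Prop :=
  IsL21Labeling G f ∧ ∀ a : V, f a ≤ k

/-- The λ-number of a graph: the least k such that G admits a k-L(2,1)-labeling. -/
noncomputable def lambdaNumber {V : Type*} (G : SimpleGraph V) : ℕ :=
  sInf {k : ℕ | ∃ f : V → ℕ, IsKL21Labeling G k f}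

/-- The cycle graph on `Fin l`; vertex `j` is the paper's u_{j+1}. -/
def CycleGraph (l : ℕ) : SimpleGraph (Fin l) :=
  SimpleGraph.fromRel (fun p q => ((p : ℕ) + 1) % l = (q : ℕ))

/-- Vertex type of members of 𝓚(C): the cycle vertices plus, for each attachment
position `i`, up to two new internal path vertices `(i, false)`, `(i, true)`. -/
abbrev CVert (l : ℕ) := Fin l ⊕ (ℕ × Bool)

/-- A valid attachment specification for 𝓚(C): attachments at pairs
(u_{i+1}, u_{i+2 mod l}) for positions 0 ≤ i ≤ l-1 (position i is the paper's index i+1),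
`some false`/`some true` meaning an attached path of length 2/3, and no two chosen
positions are consecutive (the paper's i_{j+1} ≥ i_j + 2). -/
def ValidK (l : ℕ) (D : ℕ → Option Bool) : Prop :=
  (∀ i, (D i).isSome → i < l) ∧ (∀ i, ¬ ((D i).isSome ∧ (D (i + 1)).isSome))

/-- A valid attachment specification for 𝓕(C): as for 𝓚(C), but additionally the
paper's i_1 ≥ 2 and i_t < l, i.e. positions 0 and l-1 are unused. -/
def ValidF (l : ℕ) (D : ℕ → Option Bool) : Prop :=
  ValidK l D ∧ D 0 = none ∧ D (l - 1) = none

/-- The edge relation (up to symmetrization) of the member of 𝓚(C) described by `D`. -/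
def cattachRel (l : ℕ) (D : ℕ → Option Bool) : CVert l → CVert l → Prop
  | Sum.inl p, Sum.inl q => ((p : ℕ) + 1) % l = (q : ℕ)
  | Sum.inl p, Sum.inr (i, k) =>
      ((p : ℕ) = i ∧ k = false) ∨
      ((p : ℕ) = (i + 1) % l ∧ ((D i = some false ∧ k = false) ∨ (D i = some true ∧ k = true)))
  | Sum.inr (i, k), Sum.inr (j, m) => i = j ∧ D i = some true ∧ k = false ∧ m = true
  | _, _ => False

def CAttachG (l : ℕ) (D : ℕ → Option Bool) : SimpleGraph (CVert l) :=
  SimpleGraph.fromRel (cattachRel l D)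

/-- The vertices actually present in the member of 𝓚(C) described by `D`. -/
def CActive {l : ℕ} (D : ℕ → Option Bool) : CVert l → Prop
  | Sum.inl _ => True
  | Sum.inr (i, k) => (D i).isSome ∧ (k = false ∨ D i = some true)

/-- `f` extends to a 6-L(2,1)-labeling of the member of 𝓚(C) described by `D`. -/
def CExtendsTo (l : ℕ) (D : ℕ → Option Bool) (f : Fin l → ℕ) : Prop :=
  ∃ g : ↥{w : CVert l | CActive D w} → ℕ,
    IsKL21Labeling ((CAttachG l D).induce {w : CVert l | CActive D w}) 6 g ∧
    ∀ p : Fin l, g ⟨Sum.inl p, trivial⟩ = f p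

/-- A cycle-extendable 6-L(2,1)-labeling of type 1: a 6-L(2,1)-labeling of C that
extends to a 6-L(2,1)-labeling of every H ∈ 𝓚(C). -/
def CycleExtendable1 (l : ℕ) (f : Fin l → ℕ) : Prop :=
  IsKL21Labeling (CycleGraph l) 6 f ∧ ∀ D : ℕ → Option Bool, ValidK l D → CExtendsTo l D f

/-- A cycle-extendable 6-L(2,1)-labeling of type 2: a 6-L(2,1)-labeling of C that
extends to a 6-L(2,1)-labeling of every H ∈ 𝓕(C). -/
def CycleExtendable2 (l : ℕ) (f : Fin l → ℕ) : Prop :=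
  IsKL21Labeling (CycleGraph l) 6 f ∧ ∀ D : ℕ → Option Bool, ValidF l D → CExtendsTo l D f

/-- The path graph on `Fin n`, with edges between consecutive indices. -/
def PathGraph (n : ℕ) : SimpleGraph (Fin n) :=
  SimpleGraph.fromRel (fun p q => (p : ℕ) + 1 = (q : ℕ))

/-- The graph K : the cycle u_1 ... u_l (vertex `Sum.inl j` is u_{j+1}) disjoint from
the path v_1 v_2 v_3 (vertex `Sum.inr j` is v_{j+1}), plus the bridge u_2 v_2. -/
abbrev KVert (l : ℕ) := Fin l ⊕ Fin 3

def kRel (l : ℕ) : KVert l → KVert l → Prop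
  | Sum.inl p, Sum.inl q => ((p : ℕ) + 1) % l = (q : ℕ)
  | Sum.inr p, Sum.inr q => (p : ℕ) + 1 = (q : ℕ)
  | Sum.inl p, Sum.inr q => (p : ℕ) = 1 ∧ (q : ℕ) = 1
  | _, _ => False

def KGraph (l : ℕ) : SimpleGraph (KVert l) := SimpleGraph.fromRel (kRel l)


lemma dist_two_common {V : Type*} {G : SimpleGraph V} {a b : V} (h : G.dist a b = 2) :
    a ≠ b ∧ ∃ c, G.Adj a c ∧ G.Adj c b := by
  have hne : a ≠ b := by rintro rfl; rw [SimpleGraph.dist_self] at h; omega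
  obtain ⟨w, hw⟩ := SimpleGraph.exists_walk_of_dist_ne_zero (by omega : G.dist a b ≠ 0)
  rw [h] at hw
  refine ⟨hne, ?_⟩
  cases w with
  | nil => simp at hw
  | cons h1 w' =>
    cases w' with
    | nil => simp at hw
    | cons h2 w'' =>
      cases w'' with
      | nil => exact ⟨_, h1, h2⟩
      | cons h3 w3 => simp [SimpleGraph.Walk.length_cons] at hw

lemma dist_eq_two_iff {V : Type*} {G : SimpleGraph V} {a b : V}
    (hne : a ≠ b) (hnadj : ¬ G.Adj a b) {c : V} (h1 : G.Adj a c) (h2 : G.Adj c b) :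
    G.dist a b = 2 := by
  have hle := SimpleGraph.dist_le (SimpleGraph.Walk.cons h1 (SimpleGraph.Walk.cons h2 SimpleGraph.Walk.nil))
  simp at hle
  have hr : G.Reachable a b := ⟨SimpleGraph.Walk.cons h1 (SimpleGraph.Walk.cons h2 SimpleGraph.Walk.nil)⟩
  have h0 : G.dist a b ≠ 0 := by
    rw [Ne, SimpleGraph.dist_eq_zero_iff_eq_or_not_reachable]
    push_neg; exact ⟨hne, hr⟩
  have hone : G.dist a b ≠ 1 := fun hd => hnadj (SimpleGraph.dist_eq_one_iff_adj.mp hd)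
  omega

def L2 (u v : ℕ) : Prop := 2 ≤ ((u : ℤ) - (v : ℤ)).natAbs

instance (u v : ℕ) : Decidable (L2 u v) := by unfold L2; infer_instance

lemma L2.symm {u v : ℕ} (h : L2 u v) : L2 v u := by unfold L2 at *; omega
lemma L2.ne {u v : ℕ} (h : L2 u v) : u ≠ v := by unfold L2 at h; omega

def AttachOK (cL a b cR : ℕ) : Prop :=
  (∃ w < 7, L2 w a ∧ L2 w b ∧ w ≠ cL ∧ w ≠ cR) ∧
  (∃ w1 < 7, ∃ w2 < 7, L2 w1 a ∧ w1 ≠ b ∧ w1 ≠ cL ∧ L2 w1 w2 ∧ L2 w2 b ∧ w2 ≠ a ∧ w2 ≠ cR)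

instance (cL a b cR : ℕ) : Decidable (AttachOK cL a b cR) := by unfold AttachOK; infer_instance

def GoodT (x0 y0 z0 x y z : ℕ) : Prop :=
  x0 ≤ 6 ∧ y0 ≤ 6 ∧ z0 ≤ 6 ∧ x ≤ 6 ∧ y ≤ 6 ∧ z ≤ 6 ∧
  L2 x0 y0 ∧ L2 y0 z0 ∧ L2 z0 x0 ∧ L2 z0 x ∧ L2 x y ∧ L2 y z ∧ L2 z x ∧ L2 z x0 ∧
  x0 ≠ z0 ∧ y0 ≠ x0 ∧ z0 ≠ y0 ∧ y0 ≠ x ∧ z0 ≠ y ∧ x ≠ z ∧ x ≠ y ∧ y ≠ z ∧ y ≠ x0 ∧ z ≠ y0 ∧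
  AttachOK x0 y0 z0 x0 ∧ AttachOK x0 y0 z0 x ∧ AttachOK y0 z0 x y ∧ AttachOK z0 x y z ∧
  AttachOK z x y z ∧ AttachOK x y z x ∧ AttachOK y z x y ∧ AttachOK x y z x0

instance (x0 y0 z0 x y z : ℕ) : Decidable (GoodT x0 y0 z0 x y z) := by unfold GoodT; infer_instance

def cyc (x0 y0 z0 x y z p : ℕ) : ℕ :=
  if p = 0 then x0 else if p = 1 then y0 else if p = 2 then z0
  else if p % 3 = 0 then x else if p % 3 = 1 then y else z

section CycLemmas

variable {x0 y0 z0 x y z : ℕ} {l : ℕ}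

lemma cyc0 : cyc x0 y0 z0 x y z 0 = x0 := rfl
lemma cyc1 : cyc x0 y0 z0 x y z 1 = y0 := rfl
lemma cyc2 : cyc x0 y0 z0 x y z 2 = z0 := rfl

lemma cycb0 {p : ℕ} (h3 : 3 ≤ p) (h : p % 3 = 0) : cyc x0 y0 z0 x y z p = x := by
  unfold cyc; rw [if_neg (by omega), if_neg (by omega), if_neg (by omega), if_pos h]

lemma cycb1 {p : ℕ} (h3 : 3 ≤ p) (h : p % 3 = 1) : cyc x0 y0 z0 x y z p = y := by
  unfold cyc
  rw [if_neg (by omega), if_neg (by omega), if_neg (by omega), if_neg (by omega), if_pos h]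

lemma cycb2 {p : ℕ} (h3 : 3 ≤ p) (h : p % 3 = 2) : cyc x0 y0 z0 x y z p = z := by
  unfold cyc
  rw [if_neg (by omega), if_neg (by omega), if_neg (by omega), if_neg (by omega), if_neg (by omega)]

lemma cyc_le (h : GoodT x0 y0 z0 x y z) (p : ℕ) : cyc x0 y0 z0 x y z p ≤ 6 := by
  obtain ⟨h0, h1, h2, h3, h4, h5, -⟩ := h
  unfold cyc; split_ifs <;> assumption

-- mod helpers
lemma mod1 (hl : 3 ≤ l) {p : ℕ} (hp : p < l) :
    (p + 1) % l = p + 1 ∧ p + 1 < l ∨ p + 1 = l ∧ (p + 1) % l = 0 := by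
  rcases Nat.lt_or_ge (p + 1) l with h | h
  · exact Or.inl ⟨Nat.mod_eq_of_lt h, h⟩
  · have : p + 1 = l := by omega
    exact Or.inr ⟨this, by rw [this, Nat.mod_self]⟩

lemma mod2 (hl : 3 ≤ l) {p : ℕ} (hp : p < l) :
    (p + 2) % l = p + 2 ∧ p + 2 < l ∨ p + 2 = l ∧ (p + 2) % l = 0 ∨
      p + 1 = l ∧ (p + 2) % l = 1 := by
  rcases Nat.lt_or_ge (p + 2) l with h | h
  · exact Or.inl ⟨Nat.mod_eq_of_lt h, h⟩
  · rcases Nat.lt_or_ge (p + 1) l with h' | h'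
    · have : p + 2 = l := by omega
      exact Or.inr (Or.inl ⟨this, by rw [this, Nat.mod_self]⟩)
    · have hpl : p + 1 = l := by omega
      refine Or.inr (Or.inr ⟨hpl, ?_⟩)
      have : p + 2 = l + 1 := by omega
      rw [this, Nat.add_mod_left l 1, Nat.mod_eq_of_lt (by omega)]

lemma modm1 (hl : 3 ≤ l) {p : ℕ} (hp1 : 1 ≤ p) (hp : p < l) : (p + (l - 1)) % l = p - 1 := by
  have : p + (l - 1) = l + (p - 1) := by omega
  rw [this, Nat.add_mod_left, Nat.mod_eq_of_lt (by omega)]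

lemma modm0 (hl : 3 ≤ l) : (0 + (l - 1)) % l = l - 1 := by
  rw [Nat.zero_add, Nat.mod_eq_of_lt (by omega)]

lemma succ_inj (hl : 3 ≤ l) {p q : ℕ} (hp : p < l) (hq : q < l)
    (h : (p + 1) % l = (q + 1) % l) : p = q := by
  rcases mod1 hl hp with ⟨e1, _⟩ | ⟨e1, e1'⟩ <;> rcases mod1 hl hq with ⟨e2, _⟩ | ⟨e2, e2'⟩ <;>
    omega

lemma succ_succ (hl : 3 ≤ l) (p : ℕ) : ((p + 1) % l + 1) % l = (p + 2) % l := by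
  rw [Nat.mod_add_mod]

lemma pred_of_succ (hl : 3 ≤ l) {p q : ℕ} (hp : p < l) (hq : q < l)
    (h : (p + 1) % l = q) : p = (q + (l - 1)) % l := by
  have : q + (l - 1) = (p + 1) % l + (l - 1) := by rw [h]
  rw [this, Nat.mod_add_mod]
  have : p + 1 + (l - 1) = p + l := by omega
  rw [this, Nat.add_mod_right, Nat.mod_eq_of_lt hp]

lemma edgeL (hl : 3 ≤ l) (h3 : l % 3 = 0) (h : GoodT x0 y0 z0 x y z) :
    ∀ p < l, L2 (cyc x0 y0 z0 x y z p) (cyc x0 y0 z0 x y z ((p + 1) % l)) := by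
  obtain ⟨-, -, -, -, -, -, e1, e2, e3, e4, e5, e6, e7, e8, -⟩ := h
  intro p hp
  have hl6 : l = 3 ∨ 6 ≤ l := by omega
  rcases Nat.lt_or_ge p 3 with hsm | hbig
  · interval_cases p
    · rw [Nat.mod_eq_of_lt (by omega), cyc0, cyc1]; exact e1
    · rw [Nat.mod_eq_of_lt (by omega), cyc1, cyc2]; exact e2
    · rcases hl6 with rfl | hl6
      · norm_num [cyc0, cyc2]; exact e3
      · rw [Nat.mod_eq_of_lt (by omega), cyc2, cycb0 (by omega) (by omega)]; exact e4
  · have hl6' : 6 ≤ l := by omega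
    rcases mod1 hl hp with ⟨em, hlt⟩ | ⟨em, em'⟩
    · rw [em]
      rcases (show p % 3 = 0 ∨ p % 3 = 1 ∨ p % 3 = 2 by omega) with hr | hr | hr
      · rw [cycb0 hbig hr, cycb1 (by omega) (by omega)]; exact e5
      · rw [cycb1 hbig hr, cycb2 (by omega) (by omega)]; exact e6
      · rw [cycb2 hbig hr, cycb0 (by omega) (by omega)]; exact e7
    · rw [em', cyc0, cycb2 hbig (by omega)]; exact e8

lemma distL (hl : 3 ≤ l) (h3 : l % 3 = 0) (h : GoodT x0 y0 z0 x y z) :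
    ∀ p < l, cyc x0 y0 z0 x y z p ≠ cyc x0 y0 z0 x y z ((p + 2) % l) := by
  obtain ⟨-, -, -, -, -, -, -, -, -, -, -, -, -, -, n1, n2, n3, n4, n5, n6, n7, n8, n9, n10, -⟩ := h
  intro p hp
  rcases Nat.lt_or_ge p 3 with hsm | hbig
  · interval_cases p
    · rw [Nat.mod_eq_of_lt (by omega), cyc0, cyc2]; exact n1
    · rcases (show l = 3 ∨ 6 ≤ l by omega) with rfl | hl6
      · norm_num [cyc1, cyc0]; exact n2
      · rw [Nat.mod_eq_of_lt (by omega), cyc1, cycb0 (by omega) (by omega)]; exact n4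
    · rcases (show l = 3 ∨ 6 ≤ l by omega) with rfl | hl6
      · norm_num [cyc2, cyc1]; exact n3
      · rw [Nat.mod_eq_of_lt (by omega), cyc2, cycb1 (by omega) (by omega)]; exact n5
  · have hl6 : 6 ≤ l := by omega
    rcases mod2 hl hp with ⟨em, hlt⟩ | ⟨em, em'⟩ | ⟨em, em'⟩
    · rw [em]
      rcases (show p % 3 = 0 ∨ p % 3 = 1 ∨ p % 3 = 2 by omega) with hr | hr | hr
      · rw [cycb0 hbig hr, cycb2 (by omega) (by omega)]; exact n6
      · rw [cycb1 hbig hr, cycb0 (by omega) (by omega)]; exact fun e => n7 e.symm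
      · rw [cycb2 hbig hr, cycb1 (by omega) (by omega)]; exact fun e => n8 e.symm
    · rw [em', cyc0, cycb1 hbig (by omega)]; exact n9
    · rw [em', cyc1, cycb2 hbig (by omega)]; exact n10

lemma attachL (hl : 3 ≤ l) (h3 : l % 3 = 0) (h : GoodT x0 y0 z0 x y z) :
    ∀ p, 1 ≤ p → p + 2 ≤ l →
      AttachOK (cyc x0 y0 z0 x y z ((p + (l - 1)) % l)) (cyc x0 y0 z0 x y z p)
        (cyc x0 y0 z0 x y z ((p + 1) % l)) (cyc x0 y0 z0 x y z ((p + 2) % l)) := by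
  obtain ⟨-, -, -, -, -, -, -, -, -, -, -, -, -, -, -, -, -, -, -, -, -, -, -, -,
    A1, A2, A3, A4, A5, A6, A7, A8⟩ := h
  intro p hp1 hp2
  have hp : p < l := by omega
  have hLm : (p + (l - 1)) % l = p - 1 := modm1 hl hp1 hp
  rcases Nat.lt_or_ge p 4 with hsm | hbig
  · interval_cases p
    · -- p = 1
      rw [hLm, Nat.mod_eq_of_lt (by omega)]
      norm_num [cyc0, cyc1, cyc2]
      rcases (show l = 3 ∨ 6 ≤ l by omega) with rfl | hl6
      · norm_num [cyc0]; exact A1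
      · rw [Nat.mod_eq_of_lt (by omega), cycb0 (by omega) (by omega)]; exact A2
    · -- p = 2, l ≥ 6
      have hl6 : 6 ≤ l := by omega
      rw [hLm, Nat.mod_eq_of_lt (by omega), Nat.mod_eq_of_lt (by omega)]
      norm_num [cyc1, cyc2]
      rw [cycb0 (by omega) (by omega), cycb1 (by omega) (by omega)]; exact A3
    · -- p = 3, l ≥ 6 (since 5 ≤ l and l % 3 = 0)
      have hl6 : 6 ≤ l := by omega
      rw [hLm, Nat.mod_eq_of_lt (by omega), Nat.mod_eq_of_lt (by omega)]
      norm_num [cyc2]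
      rw [cycb0 (by omega) (by omega), cycb1 (by omega) (by omega),
        cycb2 (by omega) (by omega)]
      exact A4
  · -- p ≥ 4
    have hl6 : 6 ≤ l := by omega
    rw [hLm, Nat.mod_eq_of_lt (by omega)]
    rcases (show p % 3 = 0 ∨ p % 3 = 1 ∨ p % 3 = 2 by omega) with hr | hr | hr
    · have hcr : p + 2 < l := by
        rcases (show p + 2 < l ∨ p + 2 = l by omega) with h' | h'
        · exact h'
        · omega
      rw [Nat.mod_eq_of_lt hcr, cycb2 (by omega) (by omega), cycb0 (by omega) hr,
        cycb1 (by omega) (by omega), cycb2 (by omega) (by omega)]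
      exact A5
    · rw [cycb0 (by omega) (by omega), cycb1 (by omega) hr, cycb2 (by omega) (by omega)]
      rcases (show p + 2 < l ∨ p + 2 = l by omega) with h' | h'
      · rw [Nat.mod_eq_of_lt h', cycb0 (by omega) (by omega)]; exact A6
      · rw [h', Nat.mod_self, cyc0]; exact A8
    · have hcr : p + 2 < l := by
        rcases (show p + 2 < l ∨ p + 2 = l by omega) with h' | h'
        · exact h'
        · omega
      rw [Nat.mod_eq_of_lt hcr, cycb1 (by omega) (by omega), cycb2 (by omega) hr,
        cycb0 (by omega) (by omega), cycb1 (by omega) (by omega)]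
      exact A7

end CycLemmas

def Bridge (f0 f1 f2 x0 y0 z0 : ℕ) : Prop :=
  L2 y0 f1 ∧ y0 ≠ f0 ∧ y0 ≠ f2 ∧ f1 ≠ x0 ∧ f1 ≠ z0

instance (f0 f1 f2 x0 y0 z0 : ℕ) : Decidable (Bridge f0 f1 f2 x0 y0 z0) := by
  unfold Bridge; infer_instance

lemma goods : GoodT 1 6 3 1 6 3 ∧ GoodT 2 0 4 2 0 4 ∧ GoodT 0 3 5 0 3 5 ∧ GoodT 4 2 6 4 2 6 ∧
    GoodT 2 5 0 2 4 0 ∧ GoodT 3 0 5 3 0 5 ∧ GoodT 3 1 6 3 1 6 ∧ GoodT 0 4 6 0 4 6 ∧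
    GoodT 0 2 4 0 2 4 ∧ GoodT 1 3 6 1 3 6 ∧ GoodT 0 6 2 0 6 2 := by decide

lemma coverage : ∀ f0 f1 f2 : Fin 7, L2 f0 f1 → L2 f1 f2 → (f0:ℕ) ≠ f2 →
    (Bridge f0 f1 f2 1 6 3 ∨ Bridge f0 f1 f2 2 0 4 ∨ Bridge f0 f1 f2 0 3 5 ∨
     Bridge f0 f1 f2 4 2 6 ∨ Bridge f0 f1 f2 2 5 0 ∨ Bridge f0 f1 f2 3 0 5 ∨
     Bridge f0 f1 f2 3 1 6 ∨ Bridge f0 f1 f2 0 4 6 ∨ Bridge f0 f1 f2 0 2 4 ∨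
     Bridge f0 f1 f2 1 3 6 ∨ Bridge f0 f1 f2 0 6 2) := by decide

lemma path_dist_02 : (PathGraph 3).dist 0 2 = 2 := by
  have hadj01 : (PathGraph 3).Adj 0 1 := by
    rw [PathGraph, SimpleGraph.fromRel_adj]; decide
  have hadj12 : (PathGraph 3).Adj 1 2 := by
    rw [PathGraph, SimpleGraph.fromRel_adj]; decide
  have hnadj : ¬ (PathGraph 3).Adj 0 2 := by
    rw [PathGraph, SimpleGraph.fromRel_adj]; decide
  exact dist_eq_two_iff (by decide) hnadj hadj01 hadj12

lemma master (l : ℕ) (hl : 3 ≤ l) (h3 : l % 3 = 0)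
    (x0 y0 z0 x y z : ℕ) (f : Fin 3 → ℕ)
    (hf : IsKL21Labeling (PathGraph 3) 6 f)
    (hT : GoodT x0 y0 z0 x y z) (hB : Bridge (f 0) (f 1) (f 2) x0 y0 z0) :
    ∃ f1 : KVert l → ℕ,
      IsKL21Labeling (KGraph l) 6 f1 ∧
      (∀ j : Fin 3, f1 (Sum.inr j) = f j) ∧
      CycleExtendable2 l (fun p : Fin l => f1 (Sum.inl p)) := by
  obtain ⟨⟨hfadj, hfdist⟩, hfb⟩ := hf
  obtain ⟨hB1, hB2, hB3, hB4, hB5⟩ := hB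
  have hne02 : f 0 ≠ f 2 := hfdist 0 2 path_dist_02
  set c : ℕ → ℕ := cyc x0 y0 z0 x y z with hc
  set F : KVert l → ℕ := Sum.elim (fun p : Fin l => c ↑p) f with hF
  have hcle : ∀ p : ℕ, c p ≤ 6 := cyc_le hT
  have hE := edgeL hl h3 hT
  have hDi := distL hl h3 hT
  -- K adjacency
  have hK1 : ∀ a b : KVert l, (KGraph l).Adj a b → 2 ≤ ((F a : ℤ) - (F b : ℤ)).natAbs := by
    intro a b hab
    rw [KGraph, SimpleGraph.fromRel_adj] at hab
    obtain ⟨hne, hr⟩ := hab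
    rcases a with p | p <;> rcases b with q | q
    · have hpq : ((p:ℕ)+1) % l = (q:ℕ) ∨ ((q:ℕ)+1) % l = (p:ℕ) := by
        rcases hr with h | h
        · exact Or.inl (by simpa [kRel] using h)
        · exact Or.inr (by simpa [kRel] using h)
      rcases hpq with h | h
      · have := hE p p.isLt; rw [h] at this; exact this
      · have := hE q q.isLt; rw [h] at this; exact this.symm
    · have hpq : (p:ℕ) = 1 ∧ (q:ℕ) = 1 := by
        rcases hr with h | h
        · simpa [kRel] using h
        · simpa [kRel] using h
      have hq1 : q = 1 := by apply Fin.ext; simpa using hpq.2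
      have : F (Sum.inl p) = y0 := by
        show c (p:ℕ) = y0
        rw [hpq.1]; exact cyc1
      rw [this, hq1]
      exact hB1
    · have hpq : (q:ℕ) = 1 ∧ (p:ℕ) = 1 := by
        rcases hr with h | h
        · simpa [kRel] using h
        · simpa [kRel] using h
      have hp1 : p = 1 := by apply Fin.ext; simpa using hpq.2
      have : F (Sum.inl q) = y0 := by
        show c (q:ℕ) = y0
        rw [hpq.1]; exact cyc1
      rw [this, hp1]
      exact L2.symm hB1
    · have hpq : ((p:ℕ)+1 = (q:ℕ)) ∨ ((q:ℕ)+1 = (p:ℕ)) := by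
        rcases hr with h | h
        · exact Or.inl (by simpa [kRel] using h)
        · exact Or.inr (by simpa [kRel] using h)
      have hnepq : p ≠ q := fun e => hne (by rw [e])
      rcases hpq with h | h
      · exact hfadj p q (by rw [PathGraph, SimpleGraph.fromRel_adj]; exact ⟨hnepq, Or.inl h⟩)
      · exact L2.symm (hfadj q p (by rw [PathGraph, SimpleGraph.fromRel_adj]; exact ⟨hnepq.symm, Or.inl h⟩))
  have hK2 : ∀ a b : KVert l, (KGraph l).dist a b = 2 → F a ≠ F b := by
    intro a b hd
    obtain ⟨hne, cm, hac, hcb⟩ := dist_two_common hd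
    rw [KGraph, SimpleGraph.fromRel_adj] at hac hcb
    obtain ⟨hne1, hr1⟩ := hac
    obtain ⟨hne2, hr2⟩ := hcb
    rcases cm with qc | qc
    · rcases a with p1 | j1 <;> rcases b with p2 | j2
      · -- both cycle vertices, common cycle neighbor
        have h1 : ((p1:ℕ)+1) % l = (qc:ℕ) ∨ ((qc:ℕ)+1) % l = (p1:ℕ) := by
          rcases hr1 with h | h
          · exact Or.inl (by simpa [kRel] using h)
          · exact Or.inr (by simpa [kRel] using h)
        have h2 : ((p2:ℕ)+1) % l = (qc:ℕ) ∨ ((qc:ℕ)+1) % l = (p2:ℕ) := by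
          rcases hr2 with h | h
          · exact Or.inr (by simpa [kRel] using h)
          · exact Or.inl (by simpa [kRel] using h)
        rcases h1 with h1 | h1 <;> rcases h2 with h2 | h2
        · exact absurd (congrArg Sum.inl (Fin.ext (succ_inj hl p1.isLt p2.isLt (h1.trans h2.symm)))) hne
        · have hp2 : (p2:ℕ) = ((p1:ℕ)+2) % l := by
            rw [← h2, ← h1, succ_succ hl]
          show c (p1:ℕ) ≠ c (p2:ℕ)
          rw [hp2]; exact hDi p1 p1.isLt
        · have hp1 : (p1:ℕ) = ((p2:ℕ)+2) % l := by
            rw [← h1, ← h2, succ_succ hl]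
          show c (p1:ℕ) ≠ c (p2:ℕ)
          rw [hp1]; exact (hDi p2 p2.isLt).symm
        · exact absurd (congrArg Sum.inl (Fin.ext (h1.symm.trans h2))) hne
      · -- cycle vertex and path vertex, common cycle neighbor qc
        have h2 : (qc:ℕ) = 1 ∧ (j2:ℕ) = 1 := by
          rcases hr2 with h | h
          · simpa [kRel] using h
          · simpa [kRel] using h
        have h1 : ((p1:ℕ)+1) % l = (qc:ℕ) ∨ ((qc:ℕ)+1) % l = (p1:ℕ) := by
          rcases hr1 with h | h
          · exact Or.inl (by simpa [kRel] using h)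
          · exact Or.inr (by simpa [kRel] using h)
        have hj2 : j2 = 1 := by apply Fin.ext; simpa using h2.2
        rw [hj2]
        rcases h1 with h1 | h1
        · have hp1 : (p1:ℕ) = 0 := by
            rw [h2.1] at h1
            rcases mod1 hl p1.isLt with ⟨e, _⟩ | ⟨e, e'⟩ <;> omega
          show c (p1:ℕ) ≠ f 1
          rw [hp1]; show x0 ≠ f 1; exact fun e => hB4 e.symm
        · have hp1 : (p1:ℕ) = 2 := by
            rw [h2.1] at h1
            rw [Nat.mod_eq_of_lt (by omega)] at h1; omega
          show c (p1:ℕ) ≠ f 1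
          rw [hp1]; show z0 ≠ f 1; exact fun e => hB5 e.symm
      · -- path vertex and cycle vertex
        have h1 : (qc:ℕ) = 1 ∧ (j1:ℕ) = 1 := by
          rcases hr1 with h | h
          · simpa [kRel] using h
          · simpa [kRel] using h
        have h2 : ((p2:ℕ)+1) % l = (qc:ℕ) ∨ ((qc:ℕ)+1) % l = (p2:ℕ) := by
          rcases hr2 with h | h
          · exact Or.inr (by simpa [kRel] using h)
          · exact Or.inl (by simpa [kRel] using h)
        have hj1 : j1 = 1 := by apply Fin.ext; simpa using h1.2
        rw [hj1]
        rcases h2 with h2 | h2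
        · have hp2 : (p2:ℕ) = 0 := by
            rw [h1.1] at h2
            rcases mod1 hl p2.isLt with ⟨e, _⟩ | ⟨e, e'⟩ <;> omega
          show f 1 ≠ c (p2:ℕ)
          rw [hp2]; show f 1 ≠ x0; exact hB4
        · have hp2 : (p2:ℕ) = 2 := by
            rw [h1.1] at h2
            rw [Nat.mod_eq_of_lt (by omega)] at h2; omega
          show f 1 ≠ c (p2:ℕ)
          rw [hp2]; show f 1 ≠ z0; exact hB5
      · -- two path vertices with common cycle neighbor: both must be v2
        have h1 : (qc:ℕ) = 1 ∧ (j1:ℕ) = 1 := by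
          rcases hr1 with h | h
          · simpa [kRel] using h
          · simpa [kRel] using h
        have h2 : (qc:ℕ) = 1 ∧ (j2:ℕ) = 1 := by
          rcases hr2 with h | h
          · simpa [kRel] using h
          · simpa [kRel] using h
        exact absurd (congrArg Sum.inr (Fin.ext (h1.2.trans h2.2.symm))) hne
    · -- common neighbor on the path
      rcases a with p1 | j1 <;> rcases b with p2 | j2
      · have h1 : (p1:ℕ) = 1 ∧ (qc:ℕ) = 1 := by
          rcases hr1 with h | h
          · simpa [kRel] using h
          · simpa [kRel] using h
        have h2 : (p2:ℕ) = 1 ∧ (qc:ℕ) = 1 := by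
          rcases hr2 with h | h
          · simpa [kRel] using h
          · simpa [kRel] using h
        exact absurd (congrArg Sum.inl (Fin.ext (h1.1.trans h2.1.symm))) hne
      · have h1 : (p1:ℕ) = 1 ∧ (qc:ℕ) = 1 := by
          rcases hr1 with h | h
          · simpa [kRel] using h
          · simpa [kRel] using h
        have h2 : ((qc:ℕ)+1 = (j2:ℕ)) ∨ ((j2:ℕ)+1 = (qc:ℕ)) := by
          rcases hr2 with h | h
          · exact Or.inl (by simpa [kRel] using h)
          · exact Or.inr (by simpa [kRel] using h)
        have hcp : c (p1:ℕ) = y0 := by rw [h1.1]; exact cyc1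
        show c (p1:ℕ) ≠ f j2
        rw [hcp]
        rcases h2 with h | h
        · have : j2 = 2 := by apply Fin.ext; omega
          rw [this]; exact hB3
        · have : j2 = 0 := by apply Fin.ext; omega
          rw [this]; exact hB2
      · have h2 : (p2:ℕ) = 1 ∧ (qc:ℕ) = 1 := by
          rcases hr2 with h | h
          · simpa [kRel] using h
          · simpa [kRel] using h
        have h1 : ((j1:ℕ)+1 = (qc:ℕ)) ∨ ((qc:ℕ)+1 = (j1:ℕ)) := by
          rcases hr1 with h | h
          · exact Or.inl (by simpa [kRel] using h)
          · exact Or.inr (by simpa [kRel] using h)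
        have hcp : c (p2:ℕ) = y0 := by rw [h2.1]; exact cyc1
        show f j1 ≠ c (p2:ℕ)
        rw [hcp]
        rcases h1 with h | h
        · have : j1 = 0 := by apply Fin.ext; omega
          rw [this]; exact hB2.symm
        · have : j1 = 2 := by apply Fin.ext; omega
          rw [this]; exact hB3.symm
      · -- two path vertices, common path neighbor
        have h1 : ((j1:ℕ)+1 = (qc:ℕ)) ∨ ((qc:ℕ)+1 = (j1:ℕ)) := by
          rcases hr1 with h | h
          · exact Or.inl (by simpa [kRel] using h)
          · exact Or.inr (by simpa [kRel] using h)
        have h2 : ((qc:ℕ)+1 = (j2:ℕ)) ∨ ((j2:ℕ)+1 = (qc:ℕ)) := by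
          rcases hr2 with h | h
          · exact Or.inl (by simpa [kRel] using h)
          · exact Or.inr (by simpa [kRel] using h)
        have hq3 : (qc:ℕ) < 3 := qc.isLt
        have hj13 : (j1:ℕ) < 3 := j1.isLt
        have hj23 : (j2:ℕ) < 3 := j2.isLt
        have hnej : (j1:ℕ) ≠ (j2:ℕ) := fun e => hne (congrArg Sum.inr (Fin.ext e))
        rcases h1 with h | h <;> rcases h2 with h' | h'
        · have e1 : j1 = 0 := by apply Fin.ext; omega
          have e2 : j2 = 2 := by apply Fin.ext; omega
          rw [e1, e2]; exact hne02
        · exact absurd (by omega : (j1:ℕ) = (j2:ℕ)) hnej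
        · exact absurd (by omega : (j1:ℕ) = (j2:ℕ)) hnej
        · have e1 : j1 = 2 := by apply Fin.ext; omega
          have e2 : j2 = 0 := by apply Fin.ext; omega
          rw [e1, e2]; exact hne02.symm
  have hK3 : ∀ a : KVert l, F a ≤ 6 := by
    intro a; rcases a with p | j
    · exact hcle _
    · exact hfb j
  refine ⟨F, ⟨⟨hK1, hK2⟩, hK3⟩, fun j => rfl, ?_, ?_⟩
  · -- IsKL21Labeling of the cycle
    refine ⟨⟨?_, ?_⟩, ?_⟩
    · intro a b hab
      rw [CycleGraph, SimpleGraph.fromRel_adj] at hab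
      obtain ⟨hne, hr⟩ := hab
      rcases hr with h | h
      · have := hE a a.isLt; rw [h] at this; exact this
      · refine L2.symm ?_
        have := hE b b.isLt; rw [h] at this; exact this
    · intro a b hd
      obtain ⟨hne, qc, hac, hcb⟩ := dist_two_common hd
      rw [CycleGraph, SimpleGraph.fromRel_adj] at hac hcb
      obtain ⟨-, hr1⟩ := hac
      obtain ⟨-, hr2⟩ := hcb
      have h1 : ((a:ℕ)+1) % l = (qc:ℕ) ∨ ((qc:ℕ)+1) % l = (a:ℕ) := by
        rcases hr1 with h | h
        · exact Or.inl h
        · exact Or.inr h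
      have h2 : ((b:ℕ)+1) % l = (qc:ℕ) ∨ ((qc:ℕ)+1) % l = (b:ℕ) := by
        rcases hr2 with h | h
        · exact Or.inr h
        · exact Or.inl h
      rcases h1 with h1 | h1 <;> rcases h2 with h2 | h2
      · exact absurd (Fin.ext (succ_inj hl a.isLt b.isLt (h1.trans h2.symm))) hne
      · have hp2 : (b:ℕ) = ((a:ℕ)+2) % l := by rw [← h2, ← h1, succ_succ hl]
        show c (a:ℕ) ≠ c (b:ℕ)
        rw [hp2]; exact hDi a a.isLt
      · have hp1 : (a:ℕ) = ((b:ℕ)+2) % l := by rw [← h1, ← h2, succ_succ hl]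
        show c (a:ℕ) ≠ c (b:ℕ)
        rw [hp1]; exact (hDi b b.isLt).symm
      · exact absurd (Fin.ext (h1.symm.trans h2)) hne
    · intro a; exact hcle _
  · -- extension property
    intro D hD
    obtain ⟨⟨hDlt, hDcons⟩, hD0, hDl1⟩ := hD
    have hact : ∀ i, (D i).isSome → 1 ≤ i ∧ i + 2 ≤ l := by
      intro i hi
      have hil : i < l := hDlt i hi
      constructor
      · rcases Nat.eq_zero_or_pos i with rfl | h
        · rw [hD0] at hi; simp at hi
        · omega
      · rcases (show i = l - 1 ∨ i + 2 ≤ l by omega) with rfl | h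
        · rw [hDl1] at hi; simp at hi
        · exact h
    have HW : ∀ i, ∃ w w1 w2, (D i).isSome →
        (w ≤ 6 ∧ L2 w (c i) ∧ L2 w (c ((i+1) % l)) ∧ w ≠ c ((i+(l-1)) % l) ∧ w ≠ c ((i+2) % l)) ∧
        (w1 ≤ 6 ∧ w2 ≤ 6 ∧ L2 w1 (c i) ∧ w1 ≠ c ((i+1) % l) ∧ w1 ≠ c ((i+(l-1)) % l) ∧
          L2 w1 w2 ∧ L2 w2 (c ((i+1) % l)) ∧ w2 ≠ c i ∧ w2 ≠ c ((i+2) % l)) := by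
      intro i
      by_cases hi : (D i).isSome
      · obtain ⟨h1, h2⟩ := hact i hi
        obtain ⟨⟨w, hw7, hwa, hwb, hwL, hwR⟩, w1, hw17, w2, hw27, h3a, h3b, h3c, h3d, h3e, h3f, h3g⟩ :=
          attachL hl h3 hT i h1 h2
        exact ⟨w, w1, w2, fun _ => ⟨⟨by omega, hwa, hwb, hwL, hwR⟩,
          by omega, by omega, h3a, h3b, h3c, h3d, h3e, h3f, h3g⟩⟩
      · exact ⟨0, 0, 0, fun h => absurd h hi⟩
    choose wF w1F w2F hWit using HW
    set S : Set (CVert l) := {w : CVert l | CActive D w} with hS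
    set g : ↥S → ℕ := fun v =>
      match v.1 with
      | Sum.inl p => c ↑p
      | Sum.inr (i, false) => if D i = some true then w1F i else wF i
      | Sum.inr (i, true) => w2F i
      with hg
    have hsome_lt : ∀ i, (D i).isSome → i < l := hDlt
    have hmod1 : ∀ i, (D i).isSome → (i+1) % l = i + 1 := by
      intro i hi
      obtain ⟨h1, h2⟩ := hact i hi
      exact Nat.mod_eq_of_lt (by omega)
    -- classification of neighbors of a cycle vertex
    have classify : ∀ (qc : Fin l) (u1 : CVert l), CActive D u1 →
        (CAttachG l D).Adj (Sum.inl qc) u1 →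
        (∃ p : Fin l, u1 = Sum.inl p ∧ (((p:ℕ)+1) % l = (qc:ℕ) ∨ ((qc:ℕ)+1) % l = (p:ℕ))) ∨
        (u1 = Sum.inr ((qc:ℕ), false) ∧ (D (qc:ℕ)).isSome) ∨
        (∃ i, u1 = Sum.inr (i, false) ∧ D i = some false ∧ (qc:ℕ) = (i+1) % l) ∨
        (∃ i, u1 = Sum.inr (i, true) ∧ D i = some true ∧ (qc:ℕ) = (i+1) % l) := by
      intro qc u1 hu hadj
      rw [CAttachG, SimpleGraph.fromRel_adj] at hadj
      obtain ⟨hne, hr⟩ := hadj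
      rcases u1 with p | ⟨i, k⟩
      · refine Or.inl ⟨p, rfl, ?_⟩
        rcases hr with h | h
        · exact Or.inr (by simpa [cattachRel] using h)
        · exact Or.inl (by simpa [cattachRel] using h)
      · have h : ((qc:ℕ) = i ∧ k = false) ∨
            ((qc:ℕ) = (i+1) % l ∧ ((D i = some false ∧ k = false) ∨ (D i = some true ∧ k = true))) := by
          rcases hr with h | h
          · simpa [cattachRel] using h
          · exact absurd h (by simp [cattachRel])
        have hu' : (D i).isSome ∧ (k = false ∨ D i = some true) := hu
        rcases h with ⟨h1, rfl⟩ | ⟨h1, ⟨hDf, rfl⟩ | ⟨hDt, rfl⟩⟩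
        · subst h1
          exact Or.inr (Or.inl ⟨rfl, hu'.1⟩)
        · exact Or.inr (Or.inr (Or.inl ⟨i, rfl, hDf, h1⟩))
        · exact Or.inr (Or.inr (Or.inr ⟨i, rfl, hDt, h1⟩))
    refine ⟨g, ⟨⟨?_, ?_⟩, ?_⟩, fun p => rfl⟩
    · -- adjacency condition in the attached graph
      rintro ⟨a1, ha⟩ ⟨b1, hb⟩ hab
      have hab' : (CAttachG l D).Adj a1 b1 := hab
      rw [CAttachG, SimpleGraph.fromRel_adj] at hab'
      obtain ⟨hne, hr⟩ := hab'
      have ha' : CActive D a1 := ha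
      have hb' : CActive D b1 := hb
      rcases a1 with p | ⟨i, k⟩ <;> rcases b1 with q | ⟨j, m⟩
      · -- two cycle vertices
        have hpq : ((p:ℕ)+1) % l = (q:ℕ) ∨ ((q:ℕ)+1) % l = (p:ℕ) := by
          rcases hr with h | h
          · exact Or.inl (by simpa [cattachRel] using h)
          · exact Or.inr (by simpa [cattachRel] using h)
        show 2 ≤ ((c (p:ℕ) : ℤ) - (c (q:ℕ) : ℤ)).natAbs
        rcases hpq with h | h
        · have := hE p p.isLt; rw [h] at this; exact this
        · refine L2.symm ?_
          have := hE q q.isLt; rw [h] at this; exact this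
      · -- cycle vertex and attachment vertex
        have h : ((p:ℕ) = j ∧ m = false) ∨
            ((p:ℕ) = (j+1) % l ∧ ((D j = some false ∧ m = false) ∨ (D j = some true ∧ m = true))) := by
          rcases hr with h | h
          · simpa [cattachRel] using h
          · exact absurd h (by simp [cattachRel])
        obtain ⟨hsome, -⟩ := hb'
        rcases h with ⟨h1, rfl⟩ | ⟨h1, ⟨hDf, rfl⟩ | ⟨hDt, rfl⟩⟩
        · show 2 ≤ ((c (p:ℕ) : ℤ) - ((if D j = some true then w1F j else wF j : ℕ) : ℤ)).natAbs
          by_cases hDt : D j = some true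
          · rw [if_pos hDt, h1]
            exact L2.symm (hWit j hsome).2.2.2.1
          · rw [if_neg hDt, h1]
            exact L2.symm (hWit j hsome).1.2.1
        · show 2 ≤ ((c (p:ℕ) : ℤ) - ((if D j = some true then w1F j else wF j : ℕ) : ℤ)).natAbs
          rw [if_neg (by simp [hDf]), h1]
          exact L2.symm (hWit j hsome).1.2.2.1
        · show 2 ≤ ((c (p:ℕ) : ℤ) - ((w2F j : ℕ) : ℤ)).natAbs
          rw [h1]
          exact L2.symm (hWit j hsome).2.2.2.2.2.2.2.1
      · -- attachment vertex and cycle vertex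
        have h : ((q:ℕ) = i ∧ k = false) ∨
            ((q:ℕ) = (i+1) % l ∧ ((D i = some false ∧ k = false) ∨ (D i = some true ∧ k = true))) := by
          rcases hr with h | h
          · exact absurd h (by simp [cattachRel])
          · simpa [cattachRel] using h
        obtain ⟨hsome, -⟩ := ha'
        rcases h with ⟨h1, rfl⟩ | ⟨h1, ⟨hDf, rfl⟩ | ⟨hDt, rfl⟩⟩
        · show 2 ≤ (((if D i = some true then w1F i else wF i : ℕ) : ℤ) - (c (q:ℕ) : ℤ)).natAbs
          by_cases hDt : D i = some true
          · rw [if_pos hDt, h1]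
            exact (hWit i hsome).2.2.2.1
          · rw [if_neg hDt, h1]
            exact (hWit i hsome).1.2.1
        · show 2 ≤ (((if D i = some true then w1F i else wF i : ℕ) : ℤ) - (c (q:ℕ) : ℤ)).natAbs
          rw [if_neg (by simp [hDf]), h1]
          exact (hWit i hsome).1.2.2.1
        · show 2 ≤ (((w2F i : ℕ) : ℤ) - (c (q:ℕ) : ℤ)).natAbs
          rw [h1]
          exact (hWit i hsome).2.2.2.2.2.2.2.1
      · -- two attachment vertices
        have h : (i = j ∧ D i = some true ∧ k = false ∧ m = true) ∨
            (j = i ∧ D j = some true ∧ m = false ∧ k = true) := by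
          rcases hr with h | h
          · exact Or.inl (by simpa [cattachRel] using h)
          · exact Or.inr (by simpa [cattachRel] using h)
        obtain ⟨hsome, -⟩ := ha'
        rcases h with ⟨rfl, hDt, rfl, rfl⟩ | ⟨rfl, hDt, rfl, rfl⟩
        · show 2 ≤ (((if D i = some true then w1F i else wF i : ℕ) : ℤ) - ((w2F i : ℕ) : ℤ)).natAbs
          rw [if_pos hDt]
          exact (hWit i hsome).2.2.2.2.2.2.1
        · show 2 ≤ (((w2F j : ℕ) : ℤ) - ((if D j = some true then w1F j else wF j : ℕ) : ℤ)).natAbs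
          rw [if_pos hDt]
          exact L2.symm (hWit j hsome).2.2.2.2.2.2.1
    · -- distance-2 condition in the attached graph
      intro a b hd
      obtain ⟨hne, cm, hac, hcb⟩ := dist_two_common hd
      obtain ⟨a1, ha⟩ := a
      obtain ⟨b1, hb⟩ := b
      obtain ⟨cm1, hcm⟩ := cm
      have hne1 : a1 ≠ b1 := fun h => hne (Subtype.ext h)
      have ha' : CActive D a1 := ha
      have hb' : CActive D b1 := hb
      have hcm' : CActive D cm1 := hcm
      have hA : (CAttachG l D).Adj cm1 a1 := ((hac : (CAttachG l D).Adj a1 cm1)).symm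
      have hB : (CAttachG l D).Adj cm1 b1 := hcb
      rcases cm1 with qc | ⟨iq, kq⟩
      · rcases classify qc a1 ha' hA with ⟨p1, rfl, hp1⟩ | ⟨rfl, hsq⟩ | ⟨i1, rfl, hf1, hq1⟩ | ⟨i1, rfl, ht1, hq1⟩ <;>
          rcases classify qc b1 hb' hB with ⟨p2, rfl, hp2⟩ | ⟨rfl, hsq2⟩ | ⟨i2, rfl, hf2, hq2⟩ | ⟨i2, rfl, ht2, hq2⟩
        · rcases hp1 with h1 | h1 <;> rcases hp2 with h2 | h2
          · exact absurd (congrArg Sum.inl (Fin.ext (succ_inj hl p1.isLt p2.isLt (h1.trans h2.symm)))) hne1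
          · have hp : (p2:ℕ) = ((p1:ℕ)+2) % l := by rw [← h2, ← h1, succ_succ hl]
            show c (p1:ℕ) ≠ c (p2:ℕ)
            rw [hp]; exact hDi p1 p1.isLt
          · have hp : (p1:ℕ) = ((p2:ℕ)+2) % l := by rw [← h1, ← h2, succ_succ hl]
            show c (p1:ℕ) ≠ c (p2:ℕ)
            rw [hp]; exact (hDi p2 p2.isLt).symm
          · exact absurd (congrArg Sum.inl (Fin.ext (h1.symm.trans h2))) hne1
        · show c (p1:ℕ) ≠ (if D (qc:ℕ) = some true then w1F (qc:ℕ) else wF (qc:ℕ))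
          rcases hp1 with h1 | h1
          · have hp : (p1:ℕ) = ((qc:ℕ)+(l-1)) % l := pred_of_succ hl p1.isLt qc.isLt h1
            rw [hp]
            by_cases hDt : D (qc:ℕ) = some true
            · rw [if_pos hDt]; exact ((hWit _ hsq2).2.2.2.2.2.1).symm
            · rw [if_neg hDt]; exact ((hWit _ hsq2).1.2.2.2.1).symm
          · rw [← h1]
            by_cases hDt : D (qc:ℕ) = some true
            · rw [if_pos hDt]; exact ((hWit _ hsq2).2.2.2.2.1).symm
            · rw [if_neg hDt]; exact (L2.ne (hWit _ hsq2).1.2.2.1).symm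
        · have hsome2 : (D i2).isSome := by rw [hf2]; rfl
          show c (p1:ℕ) ≠ (if D i2 = some true then w1F i2 else wF i2)
          rw [if_neg (by simp [hf2])]
          rcases hp1 with h1 | h1
          · have hp : (p1:ℕ) = i2 := succ_inj hl p1.isLt (hsome_lt i2 hsome2) (by rw [h1, hq2])
            rw [hp]
            exact (L2.ne (hWit _ hsome2).1.2.1).symm
          · have hp : (p1:ℕ) = (i2+2) % l := by rw [← h1, hq2, succ_succ hl]
            rw [hp]
            exact ((hWit _ hsome2).1.2.2.2.2).symm
        · have hsome2 : (D i2).isSome := by rw [ht2]; rfl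
          show c (p1:ℕ) ≠ w2F i2
          rcases hp1 with h1 | h1
          · have hp : (p1:ℕ) = i2 := succ_inj hl p1.isLt (hsome_lt i2 hsome2) (by rw [h1, hq2])
            rw [hp]; exact ((hWit _ hsome2).2.2.2.2.2.2.2.2.1).symm
          · have hp : (p1:ℕ) = (i2+2) % l := by rw [← h1, hq2, succ_succ hl]
            rw [hp]; exact ((hWit _ hsome2).2.2.2.2.2.2.2.2.2).symm
        · show (if D (qc:ℕ) = some true then w1F (qc:ℕ) else wF (qc:ℕ)) ≠ c (p2:ℕ)
          rcases hp2 with h2 | h2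
          · have hp : (p2:ℕ) = ((qc:ℕ)+(l-1)) % l := pred_of_succ hl p2.isLt qc.isLt h2
            rw [hp]
            by_cases hDt : D (qc:ℕ) = some true
            · rw [if_pos hDt]; exact (hWit _ hsq).2.2.2.2.2.1
            · rw [if_neg hDt]; exact (hWit _ hsq).1.2.2.2.1
          · rw [← h2]
            by_cases hDt : D (qc:ℕ) = some true
            · rw [if_pos hDt]; exact (hWit _ hsq).2.2.2.2.1
            · rw [if_neg hDt]; exact L2.ne (hWit _ hsq).1.2.2.1
        · exact absurd rfl hne1
        · exfalso
          have hsome2 : (D i2).isSome := by rw [hf2]; rfl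
          have h1 : (i2+1) % l = i2+1 := hmod1 i2 hsome2
          exact hDcons i2 ⟨hsome2, by rw [← h1, ← hq2]; exact hsq⟩
        · exfalso
          have hsome2 : (D i2).isSome := by rw [ht2]; rfl
          have h1 : (i2+1) % l = i2+1 := hmod1 i2 hsome2
          exact hDcons i2 ⟨hsome2, by rw [← h1, ← hq2]; exact hsq⟩
        · have hsome1 : (D i1).isSome := by rw [hf1]; rfl
          show (if D i1 = some true then w1F i1 else wF i1) ≠ c (p2:ℕ)
          rw [if_neg (by simp [hf1])]
          rcases hp2 with h2 | h2
          · have hp : (p2:ℕ) = i1 := succ_inj hl p2.isLt (hsome_lt i1 hsome1) (by rw [h2, hq1])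
            rw [hp]; exact L2.ne (hWit _ hsome1).1.2.1
          · have hp : (p2:ℕ) = (i1+2) % l := by rw [← h2, hq1, succ_succ hl]
            rw [hp]; exact (hWit _ hsome1).1.2.2.2.2
        · exfalso
          have hsome1 : (D i1).isSome := by rw [hf1]; rfl
          have h1 : (i1+1) % l = i1+1 := hmod1 i1 hsome1
          exact hDcons i1 ⟨hsome1, by rw [← h1, ← hq1]; exact hsq2⟩
        · have hsome1 : (D i1).isSome := by rw [hf1]; rfl
          have hsome2 : (D i2).isSome := by rw [hf2]; rfl
          have hi : i1 = i2 := succ_inj hl (hsome_lt i1 hsome1) (hsome_lt i2 hsome2) (by rw [← hq1, ← hq2])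
          exact absurd (by rw [hi]) hne1
        · have hsome1 : (D i1).isSome := by rw [hf1]; rfl
          have hsome2 : (D i2).isSome := by rw [ht2]; rfl
          have hi : i1 = i2 := succ_inj hl (hsome_lt i1 hsome1) (hsome_lt i2 hsome2) (by rw [← hq1, ← hq2])
          rw [hi] at hf1
          exact absurd (hf1.symm.trans ht2) (by simp)
        · have hsome1 : (D i1).isSome := by rw [ht1]; rfl
          show w2F i1 ≠ c (p2:ℕ)
          rcases hp2 with h2 | h2
          · have hp : (p2:ℕ) = i1 := succ_inj hl p2.isLt (hsome_lt i1 hsome1) (by rw [h2, hq1])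
            rw [hp]; exact (hWit _ hsome1).2.2.2.2.2.2.2.2.1
          · have hp : (p2:ℕ) = (i1+2) % l := by rw [← h2, hq1, succ_succ hl]
            rw [hp]; exact (hWit _ hsome1).2.2.2.2.2.2.2.2.2
        · exfalso
          have hsome1 : (D i1).isSome := by rw [ht1]; rfl
          have h1 : (i1+1) % l = i1+1 := hmod1 i1 hsome1
          exact hDcons i1 ⟨hsome1, by rw [← h1, ← hq1]; exact hsq2⟩
        · have hsome1 : (D i1).isSome := by rw [ht1]; rfl
          have hsome2 : (D i2).isSome := by rw [hf2]; rfl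
          have hi : i1 = i2 := succ_inj hl (hsome_lt i1 hsome1) (hsome_lt i2 hsome2) (by rw [← hq1, ← hq2])
          rw [hi] at ht1
          exact absurd (hf2.symm.trans ht1) (by simp)
        · have hsome1 : (D i1).isSome := by rw [ht1]; rfl
          have hsome2 : (D i2).isSome := by rw [ht2]; rfl
          have hi : i1 = i2 := succ_inj hl (hsome_lt i1 hsome1) (hsome_lt i2 hsome2) (by rw [← hq1, ← hq2])
          exact absurd (by rw [hi]) hne1
      · have hcm2 : (D iq).isSome ∧ (kq = false ∨ D iq = some true) := hcm'
        have hsomeq : (D iq).isSome := hcm2.1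
        have hEq := hE iq (hsome_lt iq hsomeq)
        have classify2 : ∀ (u1 : CVert l), (CAttachG l D).Adj (Sum.inr (iq, kq)) u1 →
            (kq = false ∧ ∃ p : Fin l, u1 = Sum.inl p ∧ (p:ℕ) = iq) ∨
            (kq = false ∧ D iq = some false ∧ ∃ p : Fin l, u1 = Sum.inl p ∧ (p:ℕ) = (iq+1) % l) ∨
            (kq = true ∧ D iq = some true ∧ ∃ p : Fin l, u1 = Sum.inl p ∧ (p:ℕ) = (iq+1) % l) ∨
            (kq = false ∧ D iq = some true ∧ u1 = Sum.inr (iq, true)) ∨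
            (kq = true ∧ D iq = some true ∧ u1 = Sum.inr (iq, false)) := by
          intro u1 hadj
          rw [CAttachG, SimpleGraph.fromRel_adj] at hadj
          obtain ⟨hne', hr⟩ := hadj
          rcases u1 with p | ⟨j, m⟩
          · have h : ((p:ℕ) = iq ∧ kq = false) ∨
                ((p:ℕ) = (iq+1) % l ∧ ((D iq = some false ∧ kq = false) ∨ (D iq = some true ∧ kq = true))) := by
              rcases hr with h | h
              · exact absurd h (by simp [cattachRel])
              · simpa [cattachRel] using h
            rcases h with ⟨h1, h2⟩ | ⟨h1, ⟨hDf, h2⟩ | ⟨hDt, h2⟩⟩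
            · exact Or.inl ⟨h2, p, rfl, h1⟩
            · exact Or.inr (Or.inl ⟨h2, hDf, p, rfl, h1⟩)
            · exact Or.inr (Or.inr (Or.inl ⟨h2, hDt, p, rfl, h1⟩))
          · have h : (iq = j ∧ D iq = some true ∧ kq = false ∧ m = true) ∨
                (j = iq ∧ D j = some true ∧ m = false ∧ kq = true) := by
              rcases hr with h | h
              · exact Or.inl (by simpa [cattachRel] using h)
              · exact Or.inr (by simpa [cattachRel] using h)
            rcases h with ⟨rfl, hDt, h2, rfl⟩ | ⟨rfl, hDt, rfl, h2⟩
            · exact Or.inr (Or.inr (Or.inr (Or.inl ⟨h2, hDt, rfl⟩)))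
            · exact Or.inr (Or.inr (Or.inr (Or.inr ⟨h2, hDt, rfl⟩)))
        rcases classify2 a1 hA with ⟨hkq, p1, rfl, hp1⟩ | ⟨hkq, hDfq, p1, rfl, hp1⟩ | ⟨hkq, hDtq, p1, rfl, hp1⟩ | ⟨hkq, hDtq, rfl⟩ | ⟨hkq, hDtq, rfl⟩ <;>
          rcases classify2 b1 hB with ⟨hkq2, p2, rfl, hp2⟩ | ⟨hkq2, hDfq2, p2, rfl, hp2⟩ | ⟨hkq2, hDtq2, p2, rfl, hp2⟩ | ⟨hkq2, hDtq2, rfl⟩ | ⟨hkq2, hDtq2, rfl⟩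
        · exact absurd (congrArg Sum.inl (Fin.ext (hp1.trans hp2.symm))) hne1
        · show c (p1:ℕ) ≠ c (p2:ℕ)
          rw [hp1, hp2]; exact L2.ne hEq
        · exact absurd (hkq.symm.trans hkq2) (by simp)
        · show c (p1:ℕ) ≠ w2F iq
          rw [hp1]; exact ((hWit _ hsomeq).2.2.2.2.2.2.2.2.1).symm
        · exact absurd (hkq.symm.trans hkq2) (by simp)
        · show c (p1:ℕ) ≠ c (p2:ℕ)
          rw [hp1, hp2]; exact (L2.ne hEq).symm
        · exact absurd (congrArg Sum.inl (Fin.ext (hp1.trans hp2.symm))) hne1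
        · exact absurd (hkq.symm.trans hkq2) (by simp)
        · exact absurd (hDfq.symm.trans hDtq2) (by simp)
        · exact absurd (hkq.symm.trans hkq2) (by simp)
        · exact absurd (hkq.symm.trans hkq2) (by simp)
        · exact absurd (hkq.symm.trans hkq2) (by simp)
        · exact absurd (congrArg Sum.inl (Fin.ext (hp1.trans hp2.symm))) hne1
        · exact absurd (hkq.symm.trans hkq2) (by simp)
        · show c (p1:ℕ) ≠ (if D iq = some true then w1F iq else wF iq)
          rw [if_pos hDtq2, hp1]
          exact ((hWit _ hsomeq).2.2.2.2.1).symm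
        · show w2F iq ≠ c (p2:ℕ)
          rw [hp2]; exact (hWit _ hsomeq).2.2.2.2.2.2.2.2.1
        · exact absurd (hDtq.symm.trans hDfq2) (by simp)
        · exact absurd (hkq.symm.trans hkq2) (by simp)
        · exact absurd rfl hne1
        · exact absurd (hkq.symm.trans hkq2) (by simp)
        · exact absurd (hkq.symm.trans hkq2) (by simp)
        · exact absurd (hkq.symm.trans hkq2) (by simp)
        · show (if D iq = some true then w1F iq else wF iq) ≠ c (p2:ℕ)
          rw [if_pos hDtq, hp2]
          exact (hWit _ hsomeq).2.2.2.2.1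
        · exact absurd (hkq.symm.trans hkq2) (by simp)
        · exact absurd rfl hne1
    · -- bounds
      rintro ⟨a1, ha⟩
      have ha' : CActive D a1 := ha
      rcases a1 with p | ⟨i, k⟩
      · exact hcle _
      · obtain ⟨hsome, -⟩ := ha'
        rcases k with _ | _
        · show (if D i = some true then w1F i else wF i) ≤ 6
          by_cases hDt : D i = some true
          · rw [if_pos hDt]; exact (hWit i hsome).2.1
          · rw [if_neg hDt]; exact (hWit i hsome).1.1
        · show w2F i ≤ 6
          exact (hWit i hsome).2.2.1

theorem stmt18 (l : ℕ) (hl : 3 ≤ l) (h3 : l % 3 = 0) (f : Fin 3 → ℕ)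
    (hf : IsKL21Labeling (PathGraph 3) 6 f) :
    ∃ f1 : KVert l → ℕ,
      IsKL21Labeling (KGraph l) 6 f1 ∧
      (∀ j : Fin 3, f1 (Sum.inr j) = f j) ∧
      CycleExtendable2 l (fun p : Fin l => f1 (Sum.inl p)) := by
  have h00 : f 0 ≤ 6 := hf.2 0
  have h11 : f 1 ≤ 6 := hf.2 1
  have h22 : f 2 ≤ 6 := hf.2 2
  have hadj01 : (PathGraph 3).Adj 0 1 := by
    rw [PathGraph, SimpleGraph.fromRel_adj]; decide
  have hadj12 : (PathGraph 3).Adj 1 2 := by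
    rw [PathGraph, SimpleGraph.fromRel_adj]; decide
  have hL01 : L2 (f 0) (f 1) := hf.1.1 0 1 hadj01
  have hL12 : L2 (f 1) (f 2) := hf.1.1 1 2 hadj12
  have hne02 : f 0 ≠ f 2 := hf.1.2 0 2 path_dist_02
  have hcov := coverage ⟨f 0, by omega⟩ ⟨f 1, by omega⟩ ⟨f 2, by omega⟩ hL01 hL12 (by simpa using hne02)
  simp only [Fin.val_mk] at hcov
  rcases hcov with hB | hB | hB | hB | hB | hB | hB | hB | hB | hB | hB
  · exact master l hl h3 1 6 3 1 6 3 f hf goods.1 hB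
  · exact master l hl h3 2 0 4 2 0 4 f hf goods.2.1 hB
  · exact master l hl h3 0 3 5 0 3 5 f hf goods.2.2.1 hB
  · exact master l hl h3 4 2 6 4 2 6 f hf goods.2.2.2.1 hB
  · exact master l hl h3 2 5 0 2 4 0 f hf goods.2.2.2.2.1 hB
  · exact master l hl h3 3 0 5 3 0 5 f hf goods.2.2.2.2.2.1 hB
  · exact master l hl h3 3 1 6 3 1 6 f hf goods.2.2.2.2.2.2.1 hB
  · exact master l hl h3 0 4 6 0 4 6 f hf goods.2.2.2.2.2.2.2.1 hB
  · exact master l hl h3 0 2 4 0 2 4 f hf goods.2.2.2.2.2.2.2.2.1 hB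
  · exact master l hl h3 1 3 6 1 3 6 f hf goods.2.2.2.2.2.2.2.2.2.1 hB
  · exact master l hl h3 0 6 2 0 6 2 f hf goods.2.2.2.2.2.2.2.2.2.2 hB
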